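/- arXiv:2201.11954 — 2 statements merged into one kernel-verified Lean document; each statement's English description precedes it below -/
import Mathlib

section
/- Theorem (population Fréchet median of inhomogeneous Erdős–Rényi graphs): Let Pr be the inhomogeneous Erdős–Rényi measure on S with edge-probability matrix P. Then the adjacency matrix M defined by M_ij = 1 if p_ij > 1/2 and M_ij = 0 otherwise is a Fréchet median, i.e., for every B ∈ S, Σ_{A∈S} d_H(A,M) Pr(A) ≤ Σ_{A∈S} d_H(A,B) Pr(A). -/
open Finset
open scoped Classical

/-- The set of pairs (i,j) with i < j. -/
def pairs (n : ℕ) : Finset (Fin n × Fin n) :=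
  Finset.univ.filter (fun q => q.1 < q.2)

/-- The set `S` of adjacency matrices: symmetric Bool matrices with zero (false) diagonal. -/
noncomputable def adjS (n : ℕ) : Finset (Matrix (Fin n) (Fin n) Bool) :=
  Finset.univ.filter (fun A => (∀ i j, A i j = A j i) ∧ ∀ i, A i i = false)

/-- The real-valued 0/1 entry of an adjacency matrix. -/
noncomputable def val {n : ℕ} (A : Matrix (Fin n) (Fin n) Bool) (i j : Fin n) : ℝ :=
  if A i j then 1 else 0

/-- The Hamming distance between two graphs. -/
noncomputable def dH {n : ℕ} (A B : Matrix (Fin n) (Fin n) Bool) : ℝ :=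
  ∑ q ∈ pairs n, |val A q.1 q.2 - val B q.1 q.2|

/-- The inhomogeneous Erdős–Rényi probability of an adjacency matrix:
`∏_{i<j} p_ij^{a_ij} (1-p_ij)^{1-a_ij}`. -/
noncomputable def erPr {n : ℕ} (p : Fin n → Fin n → ℝ) (A : Matrix (Fin n) (Fin n) Bool) : ℝ :=
  ∏ q ∈ pairs n, if A q.1 q.2 then p q.1 q.2 else 1 - p q.1 q.2

/-- The edge set of a graph: pairs (i,j), i<j, with b_ij = 1. -/
def edges {n : ℕ} (B : Matrix (Fin n) (Fin n) Bool) : Finset (Fin n × Fin n) :=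
  (pairs n).filter (fun q => B q.1 q.2 = true)

/-!
The expected Hamming distance splits into a sum over the pairs `q = (i, j)`, `i < j`, of the
expected disagreement at `q`. Pairing each graph having no edge at `q` with the graph obtained
by toggling that edge (an involution of `S` that changes only the factor of `q` in `Pr`), the
contribution of `q` becomes `Σ_{A : a_q = 0} m(p_q, c_q) · Pr_{≠q}(A)`, where
`m(x, b) = mismatchProb x b` is the probability that a Bernoulli(`x`) variable differs from `b`.
For every `x`, `m(x, b)` is minimised by `b = [x > 1/2]`, so `M` minimises every term.
-/

lemma mem_pairs {n : ℕ} {q : Fin n × Fin n} : q ∈ pairs n ↔ q.1 < q.2 := by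
  simp [pairs]

lemma mem_adjS {n : ℕ} {A : Matrix (Fin n) (Fin n) Bool} :
    A ∈ adjS n ↔ (∀ i j, A i j = A j i) ∧ ∀ i, A i i = false := by
  simp [adjS]

def flipEdge {n : ℕ} (q : Fin n × Fin n) (A : Matrix (Fin n) (Fin n) Bool) :
    Matrix (Fin n) (Fin n) Bool :=
  fun i j => if (i = q.1 ∧ j = q.2) ∨ (i = q.2 ∧ j = q.1) then !(A i j) else A i j

section FlipEdge

variable {n : ℕ}

lemma flipEdge_flipEdge (q : Fin n × Fin n) (A : Matrix (Fin n) (Fin n) Bool) :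
    flipEdge q (flipEdge q A) = A := by
  funext i j
  simp only [flipEdge]
  split_ifs <;> simp

lemma flipEdge_apply_self (q : Fin n × Fin n) (A : Matrix (Fin n) (Fin n) Bool) :
    flipEdge q A q.1 q.2 = !(A q.1 q.2) := by
  simp [flipEdge]

lemma flipEdge_apply_of_ne {q r : Fin n × Fin n} (hq : q ∈ pairs n) (hr : r ∈ pairs n)
    (hne : r ≠ q) (A : Matrix (Fin n) (Fin n) Bool) :
    flipEdge q A r.1 r.2 = A r.1 r.2 := by
  rw [mem_pairs] at hq hr
  have hoff : ¬ ((r.1 = q.1 ∧ r.2 = q.2) ∨ (r.1 = q.2 ∧ r.2 = q.1)) := by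
    rintro (⟨h1, h2⟩ | ⟨h1, h2⟩)
    · exact hne (Prod.ext h1 h2)
    · rw [h1, h2] at hr
      exact lt_asymm hq hr
  simp only [flipEdge, hoff, if_false]

lemma flipEdge_mem_adjS {q : Fin n × Fin n} (hq : q.1 ≠ q.2)
    {A : Matrix (Fin n) (Fin n) Bool} (hA : A ∈ adjS n) : flipEdge q A ∈ adjS n := by
  rw [mem_adjS] at hA ⊢
  refine ⟨fun i j => ?_, fun i => ?_⟩
  · have hswap : ((j = q.1 ∧ i = q.2) ∨ (j = q.2 ∧ i = q.1)) ↔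
        ((i = q.1 ∧ j = q.2) ∨ (i = q.2 ∧ j = q.1)) := by tauto
    simp only [flipEdge, hswap, hA.1 i j]
  · have hdiag : ¬ ((i = q.1 ∧ i = q.2) ∨ (i = q.2 ∧ i = q.1)) := by
      rintro (⟨h1, h2⟩ | ⟨h1, h2⟩) <;> exact hq (h1 ▸ h2 ▸ rfl)
    simp only [flipEdge, hdiag, if_false, hA.2 i]

end FlipEdge

noncomputable def erPrExcept {n : ℕ} (p : Fin n → Fin n → ℝ) (q : Fin n × Fin n)
    (A : Matrix (Fin n) (Fin n) Bool) : ℝ :=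
  ∏ r ∈ (pairs n).erase q, if A r.1 r.2 then p r.1 r.2 else 1 - p r.1 r.2

section ErdosRenyi

variable {n : ℕ} {p : Fin n → Fin n → ℝ} {q : Fin n × Fin n}

lemma erPr_eq_mul_erPrExcept (hq : q ∈ pairs n) (A : Matrix (Fin n) (Fin n) Bool) :
    erPr p A = (if A q.1 q.2 then p q.1 q.2 else 1 - p q.1 q.2) * erPrExcept p q A :=
  (Finset.mul_prod_erase _ _ hq).symm

lemma erPrExcept_flipEdge (hq : q ∈ pairs n) (A : Matrix (Fin n) (Fin n) Bool) :
    erPrExcept p q (flipEdge q A) = erPrExcept p q A :=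
  Finset.prod_congr rfl fun r hr => by
    rw [flipEdge_apply_of_ne hq (Finset.mem_of_mem_erase hr) (Finset.ne_of_mem_erase hr)]

lemma erPrExcept_nonneg (hp : ∀ i j, 0 ≤ p i j ∧ p i j ≤ 1) (A : Matrix (Fin n) (Fin n) Bool) :
    0 ≤ erPrExcept p q A :=
  Finset.prod_nonneg fun r _ => by
    split_ifs
    · exact (hp r.1 r.2).1
    · linarith [(hp r.1 r.2).2]

end ErdosRenyi

noncomputable def mismatchProb (x : ℝ) (b : Bool) : ℝ :=
  if b then 1 - x else x

lemma mismatchProb_le {x : ℝ} {b : Bool} (hb : b = true ↔ 1 / 2 < x)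
    (c : Bool) : mismatchProb x b ≤ mismatchProb x c := by
  cases b <;> cases c <;> simp [mismatchProb] at hb ⊢ <;> linarith

lemma sum_abs_val_sub_mul_erPr {n : ℕ} (p : Fin n → Fin n → ℝ) {q : Fin n × Fin n}
    (hq : q ∈ pairs n) (C : Matrix (Fin n) (Fin n) Bool) :
    ∑ A ∈ adjS n, |val A q.1 q.2 - val C q.1 q.2| * erPr p A
      = ∑ A ∈ (adjS n).filter (fun A => A q.1 q.2 = false),
          mismatchProb (p q.1 q.2) (C q.1 q.2) * erPrExcept p q A := by
  have hq12 : q.1 ≠ q.2 := (mem_pairs.1 hq).ne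
  have hflip : ∑ A ∈ (adjS n).filter (fun A => ¬ A q.1 q.2 = false),
        |val A q.1 q.2 - val C q.1 q.2| * erPr p A
      = ∑ A ∈ (adjS n).filter (fun A => A q.1 q.2 = false),
        |val (flipEdge q A) q.1 q.2 - val C q.1 q.2| * erPr p (flipEdge q A) := by
    refine Finset.sum_nbij' (flipEdge q) (flipEdge q) ?_ ?_ (fun A _ => flipEdge_flipEdge q A)
      (fun A _ => flipEdge_flipEdge q A) (fun A _ => by rw [flipEdge_flipEdge])
    all_goals
      intro A hA
      rw [Finset.mem_filter] at hA ⊢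
      exact ⟨flipEdge_mem_adjS hq12 hA.1, by simpa [flipEdge_apply_self] using hA.2⟩
  rw [← Finset.sum_filter_add_sum_filter_not _ (fun A => A q.1 q.2 = false), hflip,
    ← Finset.sum_add_distrib]
  refine Finset.sum_congr rfl fun A hA => ?_
  have hA0 : A q.1 q.2 = false := (Finset.mem_filter.1 hA).2
  rw [erPr_eq_mul_erPrExcept hq, erPr_eq_mul_erPrExcept hq, erPrExcept_flipEdge hq]
  rcases hC : C q.1 q.2 <;> simp [_root_.val, mismatchProb, flipEdge_apply_self, hA0, hC]

lemma sum_dH_mul_erPr {n : ℕ} (p : Fin n → Fin n → ℝ) (C : Matrix (Fin n) (Fin n) Bool) :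
    ∑ A ∈ adjS n, dH A C * erPr p A
      = ∑ q ∈ pairs n, ∑ A ∈ (adjS n).filter (fun A => A q.1 q.2 = false),
          mismatchProb (p q.1 q.2) (C q.1 q.2) * erPrExcept p q A := by
  simp only [dH, Finset.sum_mul]
  rw [Finset.sum_comm]
  exact Finset.sum_congr rfl fun q hq => sum_abs_val_sub_mul_erPr p hq C

theorem stmt8_general (n : ℕ) (p : Fin n → Fin n → ℝ)
    (hp : ∀ i j, 0 ≤ p i j ∧ p i j ≤ 1)
    (M : Matrix (Fin n) (Fin n) Bool)
    (hM : ∀ i j, M i j = true ↔ 1 / 2 < p i j) :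
    ∀ B ∈ adjS n,
      ∑ A ∈ adjS n, dH A M * erPr p A ≤ ∑ A ∈ adjS n, dH A B * erPr p A := by
  intro B _
  rw [sum_dH_mul_erPr p M, sum_dH_mul_erPr p B]
  gcongr with q _ A
  · exact erPrExcept_nonneg hp A
  · exact mismatchProb_le (hM q.1 q.2) _

theorem stmt8 (n : ℕ) (p : Fin n → Fin n → ℝ)
    (hp : ∀ i j, 0 ≤ p i j ∧ p i j ≤ 1) (hsym : ∀ i j, p i j = p j i)
    (hdiag : ∀ i, p i i = 0)
    (M : Matrix (Fin n) (Fin n) Bool)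
    (hM : ∀ i j, M i j = true ↔ 1 / 2 < p i j) :
    ∀ B ∈ adjS n,
      ∑ A ∈ adjS n, dH A M * erPr p A ≤ ∑ A ∈ adjS n, dH A B * erPr p A :=
  stmt8_general n p hp M hM
end

section
/- If B* is obtained by thresholding (b*_ij = 1 iff p_ij > 1/2), then for every B ∈ S, F_2(B) − F_2(B*) = (x(B) + c)² − (x(B*) + c)² ≥ 0, where x(B) = Σ_{(i,j)∈E(B)}(1−2p_ij) and c = Σ_{i<j} p_ij; i.e., the excess Fréchet-mean risk of any B over the thresholded graph is the difference of two squares of nonnegative quantities with x(B*) ≤ x(B). -/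
open Finset
open scoped Classical

/-! Under the Erdős–Rényi measure, `dH A B` is a sum of independent Bernoulli variables
`|a_ij - b_ij|` with mean `1 - p_ij` on the edges of `B` and `p_ij` elsewhere. Its second
moment is therefore the square of its mean `x(B) + c` plus the sum of the variances
`p_ij (1 - p_ij)`, which does not depend on `B`. Thresholding keeps exactly the negative terms
of `x(B) = ∑_{E(B)} (1 - 2 p_ij)`, so it minimises `x`, and `x(B*) + c ≥ 0` as a sum of means. -/

section ProductWeights

variable {ι α R : Type*} [Fintype ι] [DecidableEq ι] [Fintype α] [CommRing R]

lemma sum_pi_mul_mul_prod_of_sum_eq_one (w : ι → α → R) (hw : ∀ k, ∑ a, w k a = 1)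
    (x : ι → α → R) (i j : ι) :
    ∑ f : ι → α, x i (f i) * x j (f j) * ∏ k, w k (f k) =
      if i = j then ∑ a, x i a ^ 2 * w i a
      else (∑ a, x i a * w i a) * ∑ a, x j a * w j a := by
  -- Folding `x i` and `x j` into the weights makes the sum factorise over the coordinates.
  set g : ι → α → R := fun k a =>
    (if k = i then x k a else 1) * (if k = j then x k a else 1) * w k a
  have hg : ∀ f : ι → α, x i (f i) * x j (f j) * ∏ k, w k (f k) = ∏ k, g k (f k) := by
    intro f
    simp only [g, prod_mul_distrib, prod_ite_eq', mem_univ, if_true]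
  have hg_one : ∀ k ∉ ({i, j} : Finset ι), ∑ a, g k a = 1 := by
    intro k hk
    simp only [mem_insert, mem_singleton, not_or] at hk
    simp [g, hk.1, hk.2, hw k]
  simp only [hg, ← Fintype.prod_sum]
  rw [← prod_subset (subset_univ {i, j}) fun k _ hk => hg_one k hk]
  split_ifs with h
  · subst h
    simp [g, sq, mul_assoc]
  · rw [prod_pair h]
    simp [g, h, Ne.symm h]

/-- The second moment of a sum of independent variables is the squared mean plus the sum of
the variances. -/
lemma sum_pi_sq_sum_mul_prod_of_sum_eq_one (w : ι → α → R) (hw : ∀ k, ∑ a, w k a = 1)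
    (x : ι → α → R) :
    ∑ f : ι → α, (∑ i, x i (f i)) ^ 2 * ∏ k, w k (f k) =
      (∑ i, ∑ a, x i a * w i a) ^ 2 +
        ∑ i, (∑ a, x i a ^ 2 * w i a - (∑ a, x i a * w i a) ^ 2) := by
  set m : ι → R := fun i => ∑ a, x i a * w i a
  calc _ = ∑ i, ∑ j, ∑ f : ι → α, x i (f i) * x j (f j) * ∏ k, w k (f k) := by
        simp_rw [sq, sum_mul_sum, sum_mul]
        rw [sum_comm]
        exact sum_congr rfl fun i _ => sum_comm
    _ = ∑ i, ∑ j, (m i * m j + if i = j then ∑ a, x i a ^ 2 * w i a - m i ^ 2 else 0) := by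
        refine sum_congr rfl fun i _ => sum_congr rfl fun j _ => ?_
        rw [sum_pi_mul_mul_prod_of_sum_eq_one w hw]
        split_ifs with h
        · subst h; ring
        · simp [m]
    _ = _ := by
        simp only [sum_add_distrib, sum_ite_eq, mem_univ, if_true, ← sum_mul_sum,
          sum_sub_distrib]
        ring

end ProductWeights

noncomputable def ofPairs {n : ℕ} (f : pairs n → Bool) : Matrix (Fin n) (Fin n) Bool :=
  fun i j =>
    if h : i < j then f ⟨(i, j), mem_pairs.2 h⟩
    else if h : j < i then f ⟨(j, i), mem_pairs.2 h⟩ else false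

lemma ofPairs_apply {n : ℕ} (f : pairs n → Bool) (q : pairs n) :
    ofPairs f q.1.1 q.1.2 = f q := by
  simp [ofPairs, mem_pairs.1 q.2]

lemma ofPairs_mem_adjS {n : ℕ} (f : pairs n → Bool) : ofPairs f ∈ adjS n := by
  simp only [adjS, mem_filter, mem_univ, true_and]
  refine ⟨fun i j => ?_, fun i => by simp [ofPairs]⟩
  rcases lt_trichotomy i j with h | rfl | h
  · simp [ofPairs, h, h.not_gt]
  · rfl
  · simp [ofPairs, h, h.not_gt]

lemma ofPairs_apply_eq {n : ℕ} {A : Matrix (Fin n) (Fin n) Bool} (hA : A ∈ adjS n) :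
    ofPairs (fun q => A q.1.1 q.1.2) = A := by
  simp only [adjS, mem_filter, mem_univ, true_and] at hA
  funext i j
  rcases lt_trichotomy i j with h | rfl | h
  · simp [ofPairs, h]
  · simp [ofPairs, hA.2]
  · simp [ofPairs, h, h.not_gt, hA.1 i j]

lemma sum_adjS_eq_sum_pi {n : ℕ} (F : Matrix (Fin n) (Fin n) Bool → ℝ) :
    ∑ A ∈ adjS n, F A = ∑ f : pairs n → Bool, F (ofPairs f) :=
  (sum_bij' (fun f _ => ofPairs f) (fun A _ q => A q.1.1 q.1.2)
    (fun f _ => ofPairs_mem_adjS f) (fun _ _ => mem_univ _)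
    (fun f _ => funext (ofPairs_apply f)) (fun _ hA => ofPairs_apply_eq hA)
    (fun _ _ => rfl)).symm

lemma dH_ofPairs {n : ℕ} (f : pairs n → Bool) (B : Matrix (Fin n) (Fin n) Bool) :
    dH (ofPairs f) B = ∑ q : pairs n, if f q = B q.1.1 q.1.2 then 0 else 1 := by
  rw [dH, ← sum_coe_sort]
  refine sum_congr rfl fun q _ => ?_
  simp only [_root_.val, ofPairs_apply]
  cases f q <;> cases B q.1.1 q.1.2 <;> norm_num

lemma erPr_ofPairs {n : ℕ} (p : Fin n → Fin n → ℝ) (f : pairs n → Bool) :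
    erPr p (ofPairs f) = ∏ q : pairs n, if f q then p q.1.1 q.1.2 else 1 - p q.1.1 q.1.2 := by
  rw [erPr, ← prod_coe_sort]
  simp only [ofPairs_apply]

lemma sum_pairs_ite_eq_sum_edges_add {n : ℕ} (p : Fin n → Fin n → ℝ)
    (B : Matrix (Fin n) (Fin n) Bool) :
    ∑ q ∈ pairs n, (if B q.1 q.2 then 1 - p q.1 q.2 else p q.1 q.2) =
      (∑ q ∈ edges B, (1 - 2 * p q.1 q.2)) + ∑ q ∈ pairs n, p q.1 q.2 := by
  rw [edges, sum_filter, ← sum_add_distrib]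
  refine sum_congr rfl fun q _ => ?_
  split_ifs <;> ring

lemma sum_adjS_dH_sq_mul_erPr {n : ℕ} (p : Fin n → Fin n → ℝ)
    (B : Matrix (Fin n) (Fin n) Bool) :
    ∑ A ∈ adjS n, dH A B ^ 2 * erPr p A =
      ((∑ q ∈ edges B, (1 - 2 * p q.1 q.2)) + ∑ q ∈ pairs n, p q.1 q.2) ^ 2 +
        ∑ q ∈ pairs n, p q.1 q.2 * (1 - p q.1 q.2) := by
  set w : pairs n → Bool → ℝ := fun q b => if b then p q.1.1 q.1.2 else 1 - p q.1.1 q.1.2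
  set x : pairs n → Bool → ℝ := fun q b => if b = B q.1.1 q.1.2 then 0 else 1
  have hw : ∀ q, ∑ b, w q b = 1 := fun q => by simp [w]
  have hmean : ∀ q : pairs n, ∑ b, x q b * w q b =
      if B q.1.1 q.1.2 then 1 - p q.1.1 q.1.2 else p q.1.1 q.1.2 := fun q => by
    cases hB : B q.1.1 q.1.2 <;> simp [x, w, hB]
  have hsq : ∀ q : pairs n, ∑ b, x q b ^ 2 * w q b = ∑ b, x q b * w q b := fun q => by
    simp [x]
  simp only [sum_adjS_eq_sum_pi, dH_ofPairs, erPr_ofPairs]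
  rw [sum_pi_sq_sum_mul_prod_of_sum_eq_one w hw x]
  simp only [hsq, hmean]
  rw [← sum_pairs_ite_eq_sum_edges_add, ← sum_coe_sort (pairs n),
    ← sum_coe_sort (pairs n) fun q => p q.1 q.2 * (1 - p q.1 q.2)]
  congr 1
  refine sum_congr rfl fun q _ => ?_
  split_ifs <;> ring

lemma Finset.sum_filter_neg_le_sum_of_subset {ι M : Type*} [AddCommMonoid M] [LinearOrder M]
    [IsOrderedAddMonoid M] {s t : Finset ι} (hts : t ⊆ s) (g : ι → M) :
    ∑ i ∈ s with g i < 0, g i ≤ ∑ i ∈ t, g i := by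
  rw [sum_filter, ← inter_eq_right.2 hts, ← filter_mem_eq_inter, sum_filter]
  refine sum_le_sum fun i _ => ?_
  split_ifs with hg ht ht
  · exact le_rfl
  · exact hg.le
  · exact not_lt.1 hg
  · exact le_rfl

lemma edges_eq_filter_of_threshold {n : ℕ} {p : Fin n → Fin n → ℝ}
    {B : Matrix (Fin n) (Fin n) Bool}
    (hB : ∀ q ∈ pairs n, (B q.1 q.2 = true ↔ 1 / 2 < p q.1 q.2)) :
    edges B = {q ∈ pairs n | 1 - 2 * p q.1 q.2 < 0} :=
  filter_congr fun q hq => (hB q hq).trans (by constructor <;> intro h <;> linarith)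

lemma sum_edges_add_sum_pairs_nonneg {n : ℕ} {p : Fin n → Fin n → ℝ}
    (hp : ∀ i j, 0 ≤ p i j ∧ p i j ≤ 1) (B : Matrix (Fin n) (Fin n) Bool) :
    0 ≤ (∑ q ∈ edges B, (1 - 2 * p q.1 q.2)) + ∑ q ∈ pairs n, p q.1 q.2 := by
  rw [← sum_pairs_ite_eq_sum_edges_add]
  refine sum_nonneg fun q _ => ?_
  split_ifs
  · linarith [(hp q.1 q.2).2]
  · exact (hp q.1 q.2).1

theorem stmt19_general (n : ℕ) (p : Fin n → Fin n → ℝ)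
    (hp : ∀ i j, 0 ≤ p i j ∧ p i j ≤ 1)
    (Bstar : Matrix (Fin n) (Fin n) Bool)
    (hBstar : ∀ q ∈ pairs n, (Bstar q.1 q.2 = true ↔ 1 / 2 < p q.1 q.2)) :
    ∀ B ∈ adjS n,
      ((∑ A ∈ adjS n, (dH A B) ^ 2 * erPr p A) - ∑ A ∈ adjS n, (dH A Bstar) ^ 2 * erPr p A =
          ((∑ q ∈ edges B, (1 - 2 * p q.1 q.2)) + ∑ q ∈ pairs n, p q.1 q.2) ^ 2 -
            ((∑ q ∈ edges Bstar, (1 - 2 * p q.1 q.2)) + ∑ q ∈ pairs n, p q.1 q.2) ^ 2) ∧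
      (∑ q ∈ edges Bstar, (1 - 2 * p q.1 q.2) ≤ ∑ q ∈ edges B, (1 - 2 * p q.1 q.2)) ∧
      (0 ≤ (∑ q ∈ edges Bstar, (1 - 2 * p q.1 q.2)) + ∑ q ∈ pairs n, p q.1 q.2) ∧
      0 ≤ (∑ A ∈ adjS n, (dH A B) ^ 2 * erPr p A) - ∑ A ∈ adjS n, (dH A Bstar) ^ 2 * erPr p A := by
  intro B _
  have hexcess := sum_adjS_dH_sq_mul_erPr p B
  have hexcess_star := sum_adjS_dH_sq_mul_erPr p Bstar
  have hle : ∑ q ∈ edges Bstar, (1 - 2 * p q.1 q.2) ≤ ∑ q ∈ edges B, (1 - 2 * p q.1 q.2) := by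
    rw [edges_eq_filter_of_threshold hBstar]
    exact sum_filter_neg_le_sum_of_subset (filter_subset _ _) _
  have hnonneg := sum_edges_add_sum_pairs_nonneg hp Bstar
  refine ⟨by rw [hexcess, hexcess_star]; ring, hle, hnonneg, ?_⟩
  have hsq := pow_le_pow_left₀ hnonneg (add_le_add_left hle (∑ q ∈ pairs n, p q.1 q.2)) 2
  rw [hexcess, hexcess_star]
  linarith

theorem stmt19 (n : ℕ) (p : Fin n → Fin n → ℝ)
    (hp : ∀ i j, 0 ≤ p i j ∧ p i j ≤ 1) (hsym : ∀ i j, p i j = p j i)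
    (hdiag : ∀ i, p i i = 0)
    (Bstar : Matrix (Fin n) (Fin n) Bool) (hBS : Bstar ∈ adjS n)
    (hBstar : ∀ q ∈ pairs n, (Bstar q.1 q.2 = true ↔ 1 / 2 < p q.1 q.2)) :
    ∀ B ∈ adjS n,
      ((∑ A ∈ adjS n, (dH A B) ^ 2 * erPr p A) - ∑ A ∈ adjS n, (dH A Bstar) ^ 2 * erPr p A =
          ((∑ q ∈ edges B, (1 - 2 * p q.1 q.2)) + ∑ q ∈ pairs n, p q.1 q.2) ^ 2 -
            ((∑ q ∈ edges Bstar, (1 - 2 * p q.1 q.2)) + ∑ q ∈ pairs n, p q.1 q.2) ^ 2) ∧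
      (∑ q ∈ edges Bstar, (1 - 2 * p q.1 q.2) ≤ ∑ q ∈ edges B, (1 - 2 * p q.1 q.2)) ∧
      (0 ≤ (∑ q ∈ edges Bstar, (1 - 2 * p q.1 q.2)) + ∑ q ∈ pairs n, p q.1 q.2) ∧
      0 ≤ (∑ A ∈ adjS n, (dH A B) ^ 2 * erPr p A) - ∑ A ∈ adjS n, (dH A Bstar) ^ 2 * erPr p A :=
  stmt19_general n p hp Bstar hBstar
end
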